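/- arXiv:2008.11023 — 2 statements merged into one kernel-verified Lean document; each statement's English description precedes it below -/
import Mathlib

section
/- Every ω*-well-filtered T0 space is an ω*-d-space. -/
/-- A set is saturated if it is the intersection of all open sets containing it. -/
def IsSaturatedSet {X : Type*} [TopologicalSpace X] (A : Set X) : Prop :=
  A = ⋂₀ {U : Set X | IsOpen U ∧ A ⊆ U}

/-- A family of sets is countably-filtered (countably-directed for reverse inclusion):
it is nonempty and every nonempty countable subfamily has a member below it. -/
def CountablyFiltered {X : Type*} (𝒦 : Set (Set X)) : Prop :=
  𝒦.Nonempty ∧ ∀ S ⊆ 𝒦, S.Countable → S.Nonempty → ∃ K ∈ 𝒦, ∀ J ∈ S, K ⊆ J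

/-- `X` is ω*-well-filtered: for every countably-filtered family of nonempty compact
saturated sets and every open `U` containing the intersection, some member is in `U`. -/
def OmegaStarWF (X : Type*) [TopologicalSpace X] : Prop :=
  ∀ 𝒦 : Set (Set X), (∀ K ∈ 𝒦, K.Nonempty ∧ IsCompact K ∧ IsSaturatedSet K) →
    CountablyFiltered 𝒦 → ∀ U : Set X, IsOpen U → ⋂₀ 𝒦 ⊆ U → ∃ K ∈ 𝒦, K ⊆ U

/-- A nonempty subset `D` is countably-directed for the specialization order
(`x ≤ y` iff `x ∈ closure {y}`). -/
def CDspec {X : Type*} [TopologicalSpace X] (D : Set X) : Prop :=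
  D.Nonempty ∧ ∀ S ⊆ D, S.Countable → S.Nonempty → ∃ b ∈ D, ∀ s ∈ S, s ∈ closure {b}

/-- Saturation of a singleton. -/
def satPt {X : Type*} [TopologicalSpace X] (d : X) : Set X :=
  {y : X | d ∈ closure {y}}

lemma mem_satPt_self {X : Type*} [TopologicalSpace X] (d : X) : d ∈ satPt d :=
  subset_closure rfl

lemma satPt_subset_open {X : Type*} [TopologicalSpace X] {d : X} {U : Set X}
    (hU : IsOpen U) (hd : d ∈ U) : satPt d ⊆ U := by
  intro y hy
  rcases (mem_closure_iff.mp hy) U hU hd with ⟨z, hzU, hz⟩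
  rcases hz with rfl
  exact hzU

lemma satPt_mono {X : Type*} [TopologicalSpace X] {d b : X}
    (hdb : d ∈ closure ({b} : Set X)) : satPt b ⊆ satPt d := by
  intro y hy
  have : closure ({b} : Set X) ⊆ closure ({y} : Set X) :=
    closure_minimal (Set.singleton_subset_iff.mpr hy) isClosed_closure
  exact this hdb

lemma satPt_compact {X : Type*} [TopologicalSpace X] (d : X) : IsCompact (satPt d) := by
  apply isCompact_of_finite_subcover
  intro ι U hU hcov
  have hd : d ∈ ⋃ i, U i := hcov (mem_satPt_self d)
  rcases Set.mem_iUnion.mp hd with ⟨i, hi⟩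
  refine ⟨{i}, ?_⟩
  intro y hy
  simp only [Finset.mem_singleton, Set.mem_iUnion]
  exact ⟨i, rfl, satPt_subset_open (hU i) hi hy⟩

lemma satPt_saturated {X : Type*} [TopologicalSpace X] (d : X) :
    IsSaturatedSet (satPt d) := by
  apply Set.Subset.antisymm
  · intro y hy
    exact Set.mem_sInter.mpr fun U hU => satPt_subset_open hU.1 (hU.2 (mem_satPt_self d)) hy
  · intro y hy
    rw [satPt, Set.mem_setOf_eq, mem_closure_iff]
    intro U hU hdU
    have hsub : satPt d ⊆ U := satPt_subset_open hU hdU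
    exact ⟨y, Set.mem_sInter.mp hy U ⟨hU, hsub⟩, rfl⟩

lemma satPt_injective {X : Type*} [TopologicalSpace X] [T0Space X] :
    Function.Injective (satPt (X := X)) := by
  intro d e hde
  have h1 : d ∈ satPt e := hde ▸ mem_satPt_self d
  have h2 : e ∈ satPt d := hde.symm ▸ mem_satPt_self e
  exact (inseparable_iff_mem_closure.mpr ⟨h2, h1⟩).eq

/-- Every ω*-well-filtered T0 space is an ω*-d-space: the closure of every
countably-directed set has a generic point. -/
theorem stmt9 {X : Type*} [TopologicalSpace X] [T0Space X] (h : OmegaStarWF X) :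
    ∀ D : Set X, CDspec D → ∃ x : X, closure D = closure {x} := by
  intro D hD
  obtain ⟨hne, hdir⟩ := hD
  set 𝒦 : Set (Set X) := satPt '' D with h𝒦
  have hprops : ∀ K ∈ 𝒦, K.Nonempty ∧ IsCompact K ∧ IsSaturatedSet K := by
    rintro K ⟨d, _, rfl⟩
    exact ⟨⟨d, mem_satPt_self d⟩, satPt_compact d, satPt_saturated d⟩
  have hfilt : CountablyFiltered 𝒦 := by
    constructor
    · obtain ⟨d, hd⟩ := hne
      exact ⟨satPt d, d, hd, rfl⟩
    · intro S hS hSc hSne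
      set S' : Set X := {d ∈ D | satPt d ∈ S} with hS'
      have hS'c : S'.Countable := by
        have : S' ⊆ satPt ⁻¹' S := fun d hd => hd.2
        exact (hSc.preimage satPt_injective).mono this
      have hS'ne : S'.Nonempty := by
        obtain ⟨K, hK⟩ := hSne
        obtain ⟨d, hdD, rfl⟩ := hS hK
        exact ⟨d, hdD, hK⟩
      obtain ⟨b, hbD, hb⟩ := hdir S' (fun d hd => hd.1) hS'c hS'ne
      refine ⟨satPt b, ⟨b, hbD, rfl⟩, ?_⟩
      intro J hJ
      obtain ⟨d, hdD, rfl⟩ := hS hJ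
      exact satPt_mono (hb d ⟨hdD, hJ⟩)
  by_cases hcase : (⋂₀ 𝒦 ∩ closure D).Nonempty
  · obtain ⟨y, hy𝒦, hyD⟩ := hcase
    refine ⟨y, Set.Subset.antisymm ?_ ?_⟩
    · apply closure_minimal _ isClosed_closure
      intro d hd
      exact hy𝒦 (satPt d) ⟨d, hd, rfl⟩
    · exact closure_minimal (Set.singleton_subset_iff.mpr hyD) isClosed_closure
  · exfalso
    have hsub : ⋂₀ 𝒦 ⊆ (closure D)ᶜ := by
      intro y hy
      intro hyD
      exact hcase ⟨y, hy, hyD⟩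
    obtain ⟨K, hK, hKU⟩ := h 𝒦 hprops hfilt _ isClosed_closure.isOpen_compl hsub
    obtain ⟨d, hdD, rfl⟩ := hK
    exact hKU (mem_satPt_self d) (subset_closure hdD)
end

section
/- For a T0 space X, the following are equivalent: (1) X is ω*-well-filtered; (2) the Smyth power space P_S(X) is an ω*-d-space; (3) P_S(X) is ω*-well-filtered. -/
/-- The nonempty compact saturated subsets of `X`. -/
def KSet (X : Type*) [TopologicalSpace X] :=
  {K : Set X // K.Nonempty ∧ IsCompact K ∧ IsSaturatedSet K}

/-- The upper Vietoris topology on `K(X)`, with basic open sets `□U = {K : K ⊆ U}`;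
this gives the Smyth power space `P_S(X)`. -/
def upperVietoris (X : Type*) [TopologicalSpace X] : TopologicalSpace (KSet X) :=
  TopologicalSpace.generateFrom
    {s : Set (KSet X) | ∃ U : Set X, IsOpen U ∧ s = {K : KSet X | K.1 ⊆ U}}

/-- `X` is an ω*-d-space: the closure of every countably-directed set has a generic point. -/
def IsOmegaStarDSpace (X : Type*) [TopologicalSpace X] : Prop :=
  ∀ D : Set X, CDspec D → ∃ x : X, closure D = closure {x}

/-! (1 ⇒ 3) is a topological Rudin lemma argument. If a countably filtered family `𝔎` of compact
saturated subsets of `P_S(X)` had no member inside the open set `𝒰`, take a minimal closed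
`C ⊆ P_S(X) \ 𝒰` meeting every `Q ∈ 𝔎`. Since `X` is ω*-well-filtered, `L = ⋂_Q ⋃ (C ∩ Q)` is a
point of `P_S(X)`, it lies in `C`, and minimality of `C` puts it above every point of `C` in the
specialization order, hence in every (saturated) `Q`, hence in `⋂ 𝔎 ⊆ 𝒰`: a contradiction.

(3 ⇒ 2) holds in every space: for a countably directed `D`, the saturations `↑d`, `d ∈ D`, form a
countably filtered family, and a point of `⋂ ↑d` in `closure D` is a generic point of `closure D`.

(2 ⇒ 1): a countably filtered family `𝒦` is a countably directed subset of `P_S(X)`; its generic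
point is a subset of `⋂ 𝒦 ⊆ U` lying in the closure of `𝒦`, so `□U` contains a member of `𝒦`. -/

open Set Topology TopologicalSpace

section Saturated

variable {X : Type*} [TopologicalSpace X] {A : Set X}

theorem isSaturatedSet_iff_nhdsKer_eq : IsSaturatedSet A ↔ nhdsKer A = A := by
  rw [IsSaturatedSet, nhdsKer_def, eq_comm]

theorem IsSaturatedSet.nhdsKer_eq (hA : IsSaturatedSet A) : nhdsKer A = A :=
  isSaturatedSet_iff_nhdsKer_eq.1 hA

theorem isSaturatedSet_nhdsKer (s : Set X) : IsSaturatedSet (nhdsKer s) :=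
  isSaturatedSet_iff_nhdsKer_eq.2 (nhdsKer_nhdsKer s)

theorem IsSaturatedSet.mem_of_specializes (hA : IsSaturatedSet A) {x y : X} (hxy : x ⤳ y)
    (hy : y ∈ A) : x ∈ A :=
  hA.nhdsKer_eq ▸ mem_nhdsKer_iff_specializes.2 ⟨y, hy, hxy⟩

theorem IsSaturatedSet.sInter {𝒜 : Set (Set X)} (h : ∀ A ∈ 𝒜, IsSaturatedSet A) :
    IsSaturatedSet (⋂₀ 𝒜) := by
  refine isSaturatedSet_iff_nhdsKer_eq.2 (subset_nhdsKer.antisymm' ?_)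
  exact subset_sInter fun A hA =>
    (nhdsKer_mono (sInter_subset_of_mem hA)).trans (h A hA).nhdsKer_eq.subset

theorem IsSaturatedSet.biUnion {ι : Type*} {s : Set ι} {t : ι → Set X}
    (h : ∀ i ∈ s, IsSaturatedSet (t i)) : IsSaturatedSet (⋃ i ∈ s, t i) := by
  rw [isSaturatedSet_iff_nhdsKer_eq, nhdsKer_biUnion]
  exact iUnion₂_congr fun i hi => (h i hi).nhdsKer_eq

end Saturated

section CountablyDirected

variable {α β : Type*}

def CountablyDirectedOn (r : α → α → Prop) (s : Set α) : Prop :=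
  s.Nonempty ∧ ∀ S ⊆ s, S.Countable → S.Nonempty → ∃ b ∈ s, ∀ a ∈ S, r a b

theorem countablyFiltered_iff_countablyDirectedOn {𝒦 : Set (Set α)} :
    CountablyFiltered 𝒦 ↔ CountablyDirectedOn (· ⊇ ·) 𝒦 :=
  Iff.rfl

theorem cdspec_iff_countablyDirectedOn [TopologicalSpace α] {D : Set α} :
    CDspec D ↔ CountablyDirectedOn (fun a b => a ∈ closure {b}) D :=
  Iff.rfl

theorem Set.Countable.exists_subset_image_eq {f : α → β} {s : Set α} {S : Set β}
    (hS : S.Countable) (hSs : S ⊆ f '' s) : ∃ T ⊆ s, T.Countable ∧ f '' T = S := by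
  obtain ⟨u, hus, rfl⟩ := subset_image_iff.1 hSs
  obtain ⟨T, hTu, hT⟩ := exists_subset_bijOn u f
  exact ⟨T, hTu.trans hus, countable_of_injective_of_countable_image hT.injOn (hT.image_eq ▸ hS),
    hT.image_eq⟩

variable {r : α → α → Prop} {r' : β → β → Prop} {f : α → β} {s : Set α}

theorem CountablyDirectedOn.image (h : CountablyDirectedOn r s)
    (hf : ∀ a ∈ s, ∀ b ∈ s, r a b → r' (f a) (f b)) : CountablyDirectedOn r' (f '' s) := by
  refine ⟨h.1.image f, fun S hSs hS hSne => ?_⟩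
  obtain ⟨T, hTs, hT, rfl⟩ := hS.exists_subset_image_eq hSs
  obtain ⟨b, hb, hbT⟩ := h.2 T hTs hT (image_nonempty.1 hSne)
  exact ⟨f b, mem_image_of_mem f hb, forall_mem_image.2 fun a ha => hf a (hTs ha) b hb (hbT a ha)⟩

theorem CountablyDirectedOn.of_image (h : CountablyDirectedOn r' (f '' s))
    (hf : ∀ a ∈ s, ∀ b ∈ s, r' (f a) (f b) → r a b) : CountablyDirectedOn r s := by
  refine ⟨image_nonempty.1 h.1, fun S hSs hS hSne => ?_⟩
  obtain ⟨_, ⟨b, hb, rfl⟩, hbS⟩ := h.2 (f '' S) (image_mono hSs) (hS.image f) (hSne.image f)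
  exact ⟨b, hb, fun a ha => hf a (hSs ha) b hb (hbS _ (mem_image_of_mem f ha))⟩

end CountablyDirected

section Rudin

variable {Z : Type*} [TopologicalSpace Z]

theorem IsCompact.sInter_inter_nonempty_of_isChain {Q : Set Z} (hQ : IsCompact Q)
    {c : Set (Set Z)} (hc : IsChain (· ⊆ ·) c) (hne : c.Nonempty) (hcl : ∀ C ∈ c, IsClosed C)
    (hmeet : ∀ C ∈ c, (C ∩ Q).Nonempty) : (⋂₀ c ∩ Q).Nonempty := by
  have : Nonempty c := hne.to_subtype
  by_contra h
  obtain ⟨C, hC⟩ := hQ.elim_directed_family_closed (Subtype.val : c → Set Z)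
    (fun C => hcl C C.2) (by rwa [← sInter_eq_iInter, inter_comm, ← not_nonempty_iff_eq_empty])
    (IsChain.directedOn (r := (· ⊇ ·)) (s := c) hc.symm).directed_val
  exact (hmeet C C.2).ne_empty (inter_comm Q C ▸ hC)

theorem exists_minimal_isClosed_subset_inter_nonempty {A : Set Z} {𝔎 : Set (Set Z)}
    (hA : IsClosed A) (h𝔎 : ∀ Q ∈ 𝔎, IsCompact Q) (hA𝔎 : ∀ Q ∈ 𝔎, (A ∩ Q).Nonempty) :
    ∃ C, Minimal (fun C => IsClosed C ∧ C ⊆ A ∧ ∀ Q ∈ 𝔎, (C ∩ Q).Nonempty) C := by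
  refine zorn_superset _ fun c hc hchain => ?_
  rcases c.eq_empty_or_nonempty with rfl | hne
  · exact ⟨A, ⟨hA, subset_rfl, hA𝔎⟩, by simp⟩
  refine ⟨⋂₀ c, ⟨isClosed_sInter fun C hC => (hc hC).1, ?_, fun Q hQ => ?_⟩,
    fun C hC => sInter_subset_of_mem hC⟩
  · obtain ⟨C, hC⟩ := hne
    exact (sInter_subset_of_mem hC).trans (hc hC).2.1
  · exact (h𝔎 Q hQ).sInter_inter_nonempty_of_isChain hchain hne (fun C hC => (hc hC).1)
      fun C hC => (hc hC).2.2 Q hQ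

theorem Minimal.exists_inter_subset_of_isOpen {A : Set Z} {𝔎 : Set (Set Z)} {C : Set Z}
    (hC : Minimal (fun C => IsClosed C ∧ C ⊆ A ∧ ∀ Q ∈ 𝔎, (C ∩ Q).Nonempty) C) {O : Set Z}
    (hO : IsOpen O) (hCO : (C ∩ O).Nonempty) : ∃ Q ∈ 𝔎, C ∩ Q ⊆ O := by
  by_contra! h
  have hmeet : ∀ Q ∈ 𝔎, ((C \ O) ∩ Q).Nonempty := fun Q hQ => by
    obtain ⟨K, ⟨hKC, hKQ⟩, hKO⟩ := not_subset.1 (h Q hQ)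
    exact ⟨K, ⟨hKC, hKO⟩, hKQ⟩
  have hCO' : C ⊆ C \ O :=
    hC.2 ⟨hC.1.1.sdiff hO, sdiff_subset.trans hC.1.2.1, hmeet⟩ sdiff_subset
  obtain ⟨K, hKC, hKO⟩ := hCO
  exact (hCO' hKC).2 hKO

end Rudin

section Smyth

variable {X : Type*} [TopologicalSpace X]

attribute [local instance] upperVietoris

namespace KSet

def box (U : Set X) : Set (KSet X) := {K | K.1 ⊆ U}

theorem isOpen_box {U : Set X} (hU : IsOpen U) : IsOpen (box U) :=
  isOpen_generateFrom_of_mem ⟨U, hU, rfl⟩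

theorem isTopologicalBasis_box : IsTopologicalBasis {𝒪 | ∃ U : Set X, IsOpen U ∧ 𝒪 = box U} := by
  refine isTopologicalBasis_of_subbasis_of_finiteInter rfl ⟨⟨univ, isOpen_univ, ?_⟩, ?_⟩
  · exact (eq_univ_of_forall fun K : KSet X => subset_univ K.1).symm
  · rintro _ ⟨U, hU, rfl⟩ _ ⟨V, hV, rfl⟩
    exact ⟨U ∩ V, hU.inter hV, (ext fun K => subset_inter_iff).symm⟩

theorem specializes_iff {K L : KSet X} : K ⤳ L ↔ K.1 ⊆ L.1 := by
  refine ⟨fun h => ?_, fun h => specializes_iff_forall_open.2 fun 𝒪 h𝒪 hL => ?_⟩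
  · rw [← L.2.2.2.nhdsKer_eq]
    exact subset_nhdsKer_iff.2 fun U hU hLU => h.mem_open (isOpen_box hU) hLU
  · obtain ⟨_, ⟨U, hU, rfl⟩, hLU, hU𝒪⟩ := isTopologicalBasis_box.exists_subset_of_mem_open hL h𝒪
    exact hU𝒪 (h.trans hLU)

theorem isCompact_biUnion {𝒜 : Set (KSet X)} (h𝒜 : IsCompact 𝒜) :
    IsCompact (⋃ K ∈ 𝒜, K.1) := by
  classical
  refine isCompact_of_finite_subcover fun U hU hcov => ?_
  have hmono : Monotone fun t : Finset _ => box (⋃ i ∈ t, U i) :=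
    fun s t hst K hK => hK.trans (biUnion_subset_biUnion_left hst)
  obtain ⟨t, ht⟩ := h𝒜.elim_directed_cover _ (fun t => isOpen_box (isOpen_biUnion fun i _ => hU i))
    (fun K hK => mem_iUnion.2 (K.2.2.1.elim_finite_subcover U hU
      ((subset_biUnion_of_mem (u := fun K : KSet X => K.1) hK).trans hcov)))
    hmono.directed_le
  exact ⟨t, iUnion₂_subset fun K hK => ht hK⟩

end KSet

namespace OmegaStarWF

variable {Y : Type*} [TopologicalSpace Y] {𝒦 : Set (Set Y)}

theorem sInter_nonempty (hwf : OmegaStarWF Y)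
    (hm : ∀ K ∈ 𝒦, K.Nonempty ∧ IsCompact K ∧ IsSaturatedSet K) (hcf : CountablyFiltered 𝒦) :
    (⋂₀ 𝒦).Nonempty := by
  by_contra h
  obtain ⟨K, hK, hK0⟩ := hwf 𝒦 hm hcf ∅ isOpen_empty (not_nonempty_iff_eq_empty.1 h).subset
  exact not_nonempty_empty ((hm K hK).1.mono hK0)

theorem isCompact_sInter (hwf : OmegaStarWF Y)
    (hm : ∀ K ∈ 𝒦, K.Nonempty ∧ IsCompact K ∧ IsSaturatedSet K) (hcf : CountablyFiltered 𝒦) :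
    IsCompact (⋂₀ 𝒦) := by
  refine isCompact_of_finite_subcover fun U hU hcov => ?_
  obtain ⟨A, hA, hAU⟩ := hwf 𝒦 hm hcf _ (isOpen_iUnion hU) hcov
  obtain ⟨t, ht⟩ := (hm A hA).2.1.elim_finite_subcover U hU hAU
  exact ⟨t, (sInter_subset_of_mem hA).trans ht⟩

theorem isOmegaStarDSpace (hwf : OmegaStarWF Y) : IsOmegaStarDSpace Y := by
  intro D hD
  set 𝒦 := (fun d => nhdsKer {d}) '' D
  have hcf : CountablyFiltered 𝒦 :=
    (cdspec_iff_countablyDirectedOn.1 hD).image fun a _ b _ hab x hx => mem_nhdsKer_singleton.2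
      ((mem_nhdsKer_singleton.1 hx).trans (specializes_iff_mem_closure.2 hab))
  have hm : ∀ K ∈ 𝒦, K.Nonempty ∧ IsCompact K ∧ IsSaturatedSet K := by
    rintro _ ⟨d, -, rfl⟩
    exact ⟨⟨d, subset_nhdsKer rfl⟩, isCompact_singleton.nhdsKer, isSaturatedSet_nhdsKer _⟩
  obtain ⟨x, hx𝒦, hxD⟩ : (⋂₀ 𝒦 ∩ closure D).Nonempty := by
    by_contra h
    obtain ⟨_, ⟨d, hd, rfl⟩, hdD⟩ := hwf 𝒦 hm hcf _ isClosed_closure.isOpen_compl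
      fun x hx hxD => h ⟨x, hx, hxD⟩
    exact hdD (subset_nhdsKer rfl) (subset_closure hd)
  refine ⟨x, (closure_minimal (fun d hd => ?_) isClosed_closure).antisymm
    (closure_minimal (singleton_subset_iff.2 hxD) isClosed_closure)⟩
  exact specializes_iff_mem_closure.1 (mem_nhdsKer_singleton.1 (hx𝒦 _ ⟨d, hd, rfl⟩))

theorem of_isOmegaStarDSpace_kSet (hd : IsOmegaStarDSpace (KSet X)) : OmegaStarWF X := by
  intro 𝒦 hm hcf U hU hsub
  set D : Set (KSet X) := Subtype.val ⁻¹' 𝒦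
  have himage : Subtype.val '' D = 𝒦 := image_preimage_eq_of_subset fun A hA => ⟨⟨A, hm A hA⟩, rfl⟩
  have hD : CDspec D := (himage ▸ countablyFiltered_iff_countablyDirectedOn.1 hcf).of_image
    fun K _ L _ hLK => specializes_iff_mem_closure.1 (KSet.specializes_iff.2 hLK)
  obtain ⟨L, hL⟩ := hd D hD
  have hLD : ∀ K ∈ D, L.1 ⊆ K.1 := fun K hK =>
    KSet.specializes_iff.1 (specializes_iff_mem_closure.2 (hL ▸ subset_closure hK))
  have hLU : L ∈ KSet.box U := fun x hx => hsub (mem_sInter.2 fun A hA => hLD ⟨A, hm A hA⟩ hA hx)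
  have hLcl : L ∈ closure D := by rw [hL]; exact subset_closure rfl
  obtain ⟨K, hKU, hK𝒦⟩ := mem_closure_iff.1 hLcl _ (KSet.isOpen_box hU) hLU
  exact ⟨K.1, hK𝒦, hKU⟩

theorem exists_mem_subset_of_inter_subset_box (hwf : OmegaStarWF X) {C : Set (KSet X)}
    {𝔎 : Set (Set (KSet X))} (hC : IsClosed C) (h𝔎 : ∀ Q ∈ 𝔎, IsCompact Q)
    (hcf : CountablyFiltered 𝔎) (hmeet : ∀ Q ∈ 𝔎, (C ∩ Q).Nonempty) :
    ∃ L ∈ C, ∀ Q ∈ 𝔎, ∀ U, C ∩ Q ⊆ KSet.box U → L.1 ⊆ U := by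
  set E : Set (KSet X) → Set X := fun Q => ⋃ K ∈ C ∩ Q, K.1
  have hℰ : CountablyFiltered (E '' 𝔎) := (countablyFiltered_iff_countablyDirectedOn.1 hcf).image
    fun Q _ Q' _ hQ => biUnion_subset_biUnion_left (inter_subset_inter_right C hQ)
  have hm : ∀ A ∈ E '' 𝔎, A.Nonempty ∧ IsCompact A ∧ IsSaturatedSet A := by
    rintro _ ⟨Q, hQ, rfl⟩
    obtain ⟨K, hK⟩ := hmeet Q hQ
    exact ⟨K.2.1.mono (subset_biUnion_of_mem (u := fun K : KSet X => K.1) hK),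
      KSet.isCompact_biUnion ((h𝔎 Q hQ).inter_left hC),
      IsSaturatedSet.biUnion fun K _ => K.2.2.2⟩
  let L : KSet X :=
    ⟨⋂₀ (E '' 𝔎), hwf.sInter_nonempty hm hℰ, hwf.isCompact_sInter hm hℰ,
      IsSaturatedSet.sInter fun A hA => (hm A hA).2.2⟩
  refine ⟨L, ?_, fun Q hQ U hU =>
    (sInter_subset_of_mem (mem_image_of_mem E hQ)).trans (iUnion₂_subset fun K hK => hU hK)⟩
  rw [← hC.closure_eq, KSet.isTopologicalBasis_box.mem_closure_iff]
  rintro _ ⟨U, hU, rfl⟩ hLU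
  obtain ⟨_, ⟨Q, hQ, rfl⟩, hQU⟩ := hwf _ hm hℰ U hU hLU
  obtain ⟨K, hK⟩ := hmeet Q hQ
  exact ⟨K, (subset_biUnion_of_mem (u := fun K : KSet X => K.1) hK).trans hQU, hK.1⟩

theorem kSet (hwf : OmegaStarWF X) : OmegaStarWF (KSet X) := by
  intro 𝔎 hm hcf 𝒰 h𝒰 hsub
  by_contra! h
  obtain ⟨C, hC⟩ := exists_minimal_isClosed_subset_inter_nonempty h𝒰.isClosed_compl
    (fun Q hQ => (hm Q hQ).2.1) fun Q hQ => by
      obtain ⟨K, hKQ, hK𝒰⟩ := not_subset.1 (h Q hQ)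
      exact ⟨K, hK𝒰, hKQ⟩
  obtain ⟨hCcl, hC𝒰, hCmeet⟩ := hC.1
  obtain ⟨L, hLC, hL⟩ := hwf.exists_mem_subset_of_inter_subset_box hCcl
    (fun Q hQ => (hm Q hQ).2.1) hcf hCmeet
  have hLK : ∀ K ∈ C, L ⤳ K := fun K hKC => specializes_iff_forall_open.2 fun 𝒪 h𝒪 hK𝒪 => by
    obtain ⟨_, ⟨V, hV, rfl⟩, hKV, hV𝒪⟩ :=
      KSet.isTopologicalBasis_box.exists_subset_of_mem_open hK𝒪 h𝒪
    obtain ⟨Q, hQ, hCQ⟩ := hC.exists_inter_subset_of_isOpen (KSet.isOpen_box hV) ⟨K, hKC, hKV⟩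
    exact hV𝒪 (hL Q hQ V hCQ)
  have hL𝔎 : L ∈ ⋂₀ 𝔎 := mem_sInter.2 fun Q hQ => by
    obtain ⟨K, hKC, hKQ⟩ := hCmeet Q hQ
    exact (hm Q hQ).2.2.mem_of_specializes (hLK K hKC) hKQ
  exact hC𝒰 hLC (hsub hL𝔎)

end OmegaStarWF

end Smyth

theorem stmt10_general {X : Type*} [TopologicalSpace X] :
    List.TFAE [OmegaStarWF X,
      @IsOmegaStarDSpace (KSet X) (upperVietoris X),
      @OmegaStarWF (KSet X) (upperVietoris X)] := by
  tfae_have 1 → 3 := OmegaStarWF.kSet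
  tfae_have 3 → 2 := @OmegaStarWF.isOmegaStarDSpace _ (upperVietoris X)
  tfae_have 2 → 1 := OmegaStarWF.of_isOmegaStarDSpace_kSet
  tfae_finish

/-- `X` is ω*-well-filtered iff `P_S(X)` is an ω*-d-space iff `P_S(X)` is ω*-well-filtered. -/
theorem stmt10 {X : Type*} [TopologicalSpace X] [T0Space X] :
    List.TFAE [OmegaStarWF X,
      @IsOmegaStarDSpace (KSet X) (upperVietoris X),
      @OmegaStarWF (KSet X) (upperVietoris X)] :=
  stmt10_general
end
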